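/- arXiv:0809.2075 — 4 statements merged into one kernel-verified Lean document; each statement's English description precedes it below -/
import Mathlib

section
/- If a routing scheme on a connected graph G guarantees that every edge is used by at most α of the routes, then the induced online prediction algorithm (which predicts a queried vertex's label by the label of the previously-queried vertex it is routed to) makes at most α · |cut(ℓ)| mistakes after the first query, where cut(ℓ) is the set of edges whose endpoints have different labels. -/
open Classical Finset

/-- If a routing scheme on a connected graph `G` guarantees that every
edge is used by at most `α` of the routes, then the induced online prediction
algorithm — which, on the query of vertex `v i` (for rounds `i > 0`, i.e. after the
first query), predicts the label `ℓ (v (j i))` of the previously-queried vertex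
`v (j i)` that the routing scheme routes `v i` to — makes at most
`α * |cut(ℓ)|` mistakes after the first query, where `cut(ℓ)` is the set of
edges of `G` whose endpoints have different labels. -/
theorem prediction_mistake_bound_of_low_congestion_routing
    {V L : Type} [Fintype V] (G : SimpleGraph V) (hG : G.Connected) (ℓ : V → L)
    (k : ℕ) (v : Fin k → V)
    -- the routing scheme: round `i > 0` is routed to the earlier round `j i`
    (j : Fin k → Fin k)
    (hj : ∀ i : Fin k, 0 < i.val → (j i).val < i.val)
    (P : ∀ i : Fin k, G.Walk (v i) (v (j i)))
    -- the congestion guarantee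
    (α : ℕ)
    (hcong : ∀ e ∈ G.edgeSet,
      (Finset.univ.filter fun i : Fin k => 0 < i.val ∧ e ∈ (P i).edges).card ≤ α)
    -- the induced prediction algorithm
    (predict : Fin k → L)
    (hpredict : ∀ i : Fin k, 0 < i.val → predict i = ℓ (v (j i))) :
    (Finset.univ.filter fun i : Fin k => 0 < i.val ∧ predict i ≠ ℓ (v i)).card
      ≤ α * (G.edgeFinset.filter fun e => ∃ a b : V, e = s(a, b) ∧ ℓ a ≠ ℓ b).card := by
  classical
  set cut := G.edgeFinset.filter fun e => ∃ a b : V, e = s(a, b) ∧ ℓ a ≠ ℓ b with hcut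
  have hsub : (Finset.univ.filter fun i : Fin k => 0 < i.val ∧ predict i ≠ ℓ (v i)) ⊆
      cut.biUnion (fun e =>
        Finset.univ.filter fun i : Fin k => 0 < i.val ∧ e ∈ (P i).edges) := by
    intro i hi
    simp only [Finset.mem_filter, Finset.mem_univ, true_and] at hi
    obtain ⟨hpos, hne⟩ := hi
    rw [hpredict i hpos] at hne
    obtain ⟨d, hd, hdf, hds⟩ := (P i).exists_boundary_dart {x | ℓ x = ℓ (v i)} rfl
      (by simpa using hne)
    simp only [Set.mem_setOf_eq] at hdf hds
    refine Finset.mem_biUnion.mpr ⟨d.edge, ?_, ?_⟩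
    · refine Finset.mem_filter.mpr ⟨SimpleGraph.mem_edgeFinset.mpr d.edge_mem,
        d.fst, d.snd, rfl, ?_⟩
      intro h; exact hds (h ▸ hdf)
    · exact Finset.mem_filter.mpr ⟨Finset.mem_univ _,
        hpos, List.mem_map_of_mem (f := SimpleGraph.Dart.edge) hd⟩
  calc (Finset.univ.filter fun i : Fin k => 0 < i.val ∧ predict i ≠ ℓ (v i)).card
      ≤ (cut.biUnion (fun e =>
        Finset.univ.filter fun i : Fin k => 0 < i.val ∧ e ∈ (P i).edges)).card :=
        Finset.card_le_card hsub
    _ ≤ ∑ e ∈ cut, (Finset.univ.filter fun i : Fin k =>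
          0 < i.val ∧ e ∈ (P i).edges).card := Finset.card_biUnion_le
    _ ≤ ∑ _e ∈ cut, α := by
        refine Finset.sum_le_sum fun e he => hcong e ?_
        exact SimpleGraph.mem_edgeFinset.mp
          (Finset.mem_filter.mp he).1
    _ = α * cut.card := by rw [Finset.sum_const, smul_eq_mul, mul_comm]
end

section
/- For any tree T with n vertices and any sequence of vertices t₁, t₂, …, t_k in T, there exists a set of paths q₁, …, q_{k−1} such that qᵢ connects t_{i+1} to some t_j with j ≤ i, and each edge of T belongs to at most O(log n) of the paths (i.e., at most C·log n for an absolute constant C). -/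
open Classical Finset SimpleGraph


variable {V : Type} (T : SimpleGraph V) (c : V)

/-- The graph `T` with all edges at `c` removed. -/
def delV : SimpleGraph V where
  Adj a b := T.Adj a b ∧ a ≠ c ∧ b ≠ c
  symm := ⟨fun a b h => ⟨h.1.symm, h.2.2, h.2.1⟩⟩
  loopless := ⟨fun a h => T.loopless.irrefl a h.1⟩

variable {T c}

lemma delV_reachable_of_walk {a b : V} (w : T.Walk a b) (hc : c ∉ w.support) :
    (delV T c).Reachable a b := by
  induction w with
  | nil => exact Reachable.refl _
  | @cons x y z h p ih =>
    simp only [SimpleGraph.Walk.support_cons, List.mem_cons] at hc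
    push_neg at hc
    exact Reachable.trans
      (SimpleGraph.Adj.reachable ⟨h, hc.1.symm, fun hy => hc.2 (hy ▸ p.start_mem_support)⟩)
      (ih hc.2)

lemma delV_reachable_c {z : V} (h : (delV T c).Reachable c z) : z = c := by
  obtain ⟨w⟩ := h
  cases w with
  | nil => rfl
  | cons h p => exact absurd rfl h.2.1

lemma reachable_of_delV {a b : V} (h : (delV T c).Reachable a b) : T.Reachable a b := by
  refine Reachable.mono ?_ h
  intro x y hxy; exact hxy.1

/-- component of a vertex after deleting `c` -/
noncomputable def vcmp (T : SimpleGraph V) (c : V) (v : V) : (delV T c).ConnectedComponent :=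
  (delV T c).connectedComponentMk v

lemma vcmp_eq_of_adj {a b : V} (h : T.Adj a b) (ha : a ≠ c) (hb : b ≠ c) :
    vcmp T c a = vcmp T c b :=
  ConnectedComponent.sound (SimpleGraph.Adj.reachable ⟨h, ha, hb⟩)

lemma eq_c_of_vcmp_eq {z : V} (h : vcmp T c z = vcmp T c c) : z = c :=
  delV_reachable_c ((ConnectedComponent.exact h).symm)

lemma vcmp_eq_of_walk_avoid {a b : V} (w : T.Walk a b) (hc : c ∉ w.support) :
    vcmp T c a = vcmp T c b :=
  ConnectedComponent.sound (delV_reachable_of_walk w hc)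

lemma edge_comp {x y : V} (p : T.Walk x y) (hp : p.IsPath) {e : Sym2 V} (he : e ∈ p.edges) :
    ∃ z, z ∈ e ∧ z ≠ c ∧ (vcmp T c z = vcmp T c x ∨ vcmp T c z = vcmp T c y) := by
  induction p with
  | nil => simp at he
  | @cons x x2 y h q ih =>
    have hq : q.IsPath := hp.of_cons
    have hxq : x ∉ q.support := by
      have := hp.support_nodup
      simp [Walk.support_cons] at this
      exact this.1
    rw [Walk.edges_cons, List.mem_cons] at he
    rcases he with rfl | he
    · by_cases hx : x = c
      · refine ⟨x2, Sym2.mem_mk_right _ _, fun h2 => h.ne' (h2.trans hx.symm), Or.inr ?_⟩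
        exact vcmp_eq_of_walk_avoid q (hx ▸ hxq)
      · exact ⟨x, Sym2.mem_mk_left _ _, hx, Or.inl rfl⟩
    · obtain ⟨z, hze, hzc, hz⟩ := ih hq he
      rcases hz with hz | hz
      · by_cases hx2 : x2 = c
        · exact absurd (eq_c_of_vcmp_eq (hx2 ▸ hz)) hzc
        · by_cases hx : x = c
          · refine ⟨z, hze, hzc, Or.inr ?_⟩
            rw [hz]; exact vcmp_eq_of_walk_avoid q (hx ▸ hxq)
          · exact ⟨z, hze, hzc, Or.inl (hz.trans (vcmp_eq_of_adj h.symm hx2 hx))⟩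
      · exact ⟨z, hze, hzc, Or.inr hz⟩

lemma vcmp_of_mem_support {a b x : V} (w : (delV T c).Walk a b) (hx : x ∈ w.support) :
    vcmp T c x = vcmp T c a := by
  induction w with
  | nil => simp at hx; subst hx; rfl
  | @cons u u2 b h q ih =>
    simp only [Walk.support_cons, List.mem_cons] at hx
    rcases hx with rfl | hx
    · rfl
    · exact (ih hx).trans (ConnectedComponent.sound h.reachable).symm

/-- the hom from an induced subgraph into the graph -/
def inducedHom (T : SimpleGraph V) (S : Set V) : T.induce S →g T where
  toFun := Subtype.val
  map_rel' := by intro a b h; exact h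

lemma inducedHom_apply (S : Set V) (x : S) : inducedHom T S x = x.1 := rfl

lemma induce_acyclic {S : Set V} (hT : T.IsAcyclic) : (T.induce S).IsAcyclic := by
  intro v p hp
  exact hT ((p.map (inducedHom T S)))
    ((Walk.map_isCycle_iff_of_injective Subtype.val_injective).2 hp)

lemma induce_adj_of_delV {S : Set V} {a b : V} (h : (delV T c).Adj a b)
    (ha : a ∈ S) (hb : b ∈ S) : (T.induce S).Adj ⟨a, ha⟩ ⟨b, hb⟩ := by
  simp [h.1]

lemma induce_reachable_of_delV_walk {S : Set V} {a b : V} (w : (delV T c).Walk a b)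
    (h : ∀ x ∈ w.support, x ∈ S) :
    (T.induce S).Reachable ⟨a, h _ w.start_mem_support⟩ ⟨b, h _ w.end_mem_support⟩ := by
  induction w with
  | nil => exact Reachable.refl _
  | @cons u u2 b hadj q ih =>
    refine Reachable.trans (SimpleGraph.Adj.reachable (induce_adj_of_delV hadj
      (h _ (Walk.start_mem_support _)) (h _ (by simp)))) (ih fun x hx => h _ (by simp [hx]))

variable [Fintype V]

open scoped Classical in
/-- the vertex set of a component, as a finset -/
noncomputable def compFinset (T : SimpleGraph V) (c : V) (K : (delV T c).ConnectedComponent) :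
    Finset V := Finset.univ.filter (fun v => vcmp T c v = K)

lemma mem_compFinset {K : (delV T c).ConnectedComponent} {v : V} :
    v ∈ compFinset T c K ↔ vcmp T c v = K := by
  classical simp [compFinset]

lemma compFinset_nonempty (K : (delV T c).ConnectedComponent) :
    (compFinset T c K).Nonempty := by
  obtain ⟨v, hv⟩ := K.exists_rep
  exact ⟨v, mem_compFinset.2 hv⟩

lemma compFinset_c : compFinset T c (vcmp T c c) = {c} := by
  ext v
  simp only [mem_compFinset, Finset.mem_singleton]
  exact ⟨fun h => eq_c_of_vcmp_eq h, fun h => h ▸ rfl⟩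

lemma induce_comp_isTree (hT : T.IsTree) (K : (delV T c).ConnectedComponent) :
    (T.induce (↑(compFinset T c K) : Set V)).IsTree := by
  have hne : Nonempty (↑(compFinset T c K) : Set V) := by
    obtain ⟨v, hv⟩ := compFinset_nonempty (T := T) (c := c) K
    exact ⟨⟨v, hv⟩⟩
  refine ⟨Connected.mk ?_, induce_acyclic hT.2⟩
  rintro ⟨a, ha⟩ ⟨b, hb⟩
  rw [Finset.mem_coe, mem_compFinset] at ha hb
  obtain ⟨w⟩ := ConnectedComponent.exact (show (delV T c).connectedComponentMk a =
    (delV T c).connectedComponentMk b from ha.trans hb.symm)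
  have hsup : ∀ x ∈ w.support, x ∈ (↑(compFinset T c K) : Set V) := by
    intro x hx
    rw [Finset.mem_coe, mem_compFinset]
    exact (vcmp_of_mem_support w hx).trans ha
  have := induce_reachable_of_delV_walk (T := T) w hsup
  exact this

lemma delV_support_ne {a b : V} (w : (delV T c).Walk a b) (ha : a ≠ c) : c ∉ w.support := by
  induction w with
  | nil => simp [ha.symm]
  | @cons u u2 b h q ih =>
    simp only [Walk.support_cons, List.mem_cons]
    push_neg
    exact ⟨fun hc => h.2.1 hc.symm, ih h.2.2⟩

lemma delV_walk_to_walk {a b : V} (w : (delV T c).Walk a b) :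
    ∃ w' : T.Walk a b, w'.support = w.support := by
  induction w with
  | nil => exact ⟨Walk.nil, rfl⟩
  | @cons u u2 b h q ih =>
    obtain ⟨w', hw'⟩ := ih
    exact ⟨Walk.cons h.1 w', by simp [hw']⟩

lemma path_avoid_end {a b c' : V} (p : T.Walk a b) (hp : p.IsPath) (hc' : c' ∈ p.support)
    (hne : c' ≠ b) : ∃ w : T.Walk a c', b ∉ w.support := by
  induction p with
  | nil =>
    simp only [Walk.support_nil, List.mem_singleton] at hc'
    exact absurd hc' hne
  | @cons x y z h q ih =>
    have hq : q.IsPath := ((Walk.cons_isPath_iff h q).1 hp).1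
    have hxq : x ∉ q.support := ((Walk.cons_isPath_iff h q).1 hp).2
    have hxz : x ≠ z := fun hxz => hxq (hxz ▸ q.end_mem_support)
    by_cases hu : c' = x
    · subst hu
      exact ⟨Walk.nil, by simp [hxz.symm]⟩
    · have hc'q : c' ∈ q.support := by
        simp only [Walk.support_cons, List.mem_cons] at hc'
        tauto
      obtain ⟨w, hw⟩ := ih hq hc'q hne
      refine ⟨Walk.cons h w, ?_⟩
      simp only [Walk.support_cons, List.mem_cons]
      push_neg
      exact ⟨hxz.symm, hw⟩

lemma exists_adj_comp (hconn : T.Connected) {v : V} (hv : v ≠ c) :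
    ∃ c', T.Adj c c' ∧ vcmp T c c' = vcmp T c v := by
  obtain ⟨w⟩ := hconn.preconnected c v
  have hp : w.toPath.1.IsPath := w.toPath.2
  rcases hw : w.toPath.1 with _ | ⟨h, q⟩
  · exact absurd rfl hv.symm
  · rw [hw] at hp
    refine ⟨_, h, ?_⟩
    exact vcmp_eq_of_walk_avoid q ((Walk.cons_isPath_iff h q).1 hp).2

lemma claimA (hT : T.IsAcyclic) {c' : V} (hadj : T.Adj c c') {z : V}
    (hz : vcmp T c' z = vcmp T c' c) : vcmp T c z ≠ vcmp T c c' := by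
  intro hzD
  by_cases hzc : z = c
  · subst hzc
    exact hadj.ne' (eq_c_of_vcmp_eq hzD.symm)
  by_cases hzc' : z = c'
  · subst hzc'
    exact hadj.ne (eq_c_of_vcmp_eq hz.symm)
  -- walk z → c avoiding c'
  obtain ⟨w1d⟩ := ConnectedComponent.exact hz
  have hns1 : c' ∉ w1d.support := delV_support_ne w1d hzc'
  obtain ⟨w1, hw1⟩ := delV_walk_to_walk w1d
  have hns1' : c' ∉ w1.toPath.1.support :=
    fun hmem => hns1 (hw1 ▸ Walk.support_toPath_subset w1 hmem)
  -- walk z → c' avoiding c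
  obtain ⟨w2d⟩ := ConnectedComponent.exact hzD
  have hns2 : c ∉ w2d.support := delV_support_ne w2d hzc
  obtain ⟨w2, hw2⟩ := delV_walk_to_walk w2d
  have hns2' : c ∉ w2.toPath.1.support :=
    fun hmem => hns2 (hw2 ▸ Walk.support_toPath_subset w2 hmem)
  -- two paths from c to z
  have hq1 : (w1.toPath.1.reverse).IsPath := w1.toPath.2.reverse
  have hq2 : (Walk.cons hadj (w2.toPath.1.reverse)).IsPath := by
    rw [Walk.cons_isPath_iff]
    exact ⟨w2.toPath.2.reverse, by rwa [Walk.support_reverse, List.mem_reverse]⟩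
  have := hT.path_unique ⟨w1.toPath.1.reverse, hq1⟩ ⟨Walk.cons hadj (w2.toPath.1.reverse), hq2⟩
  have hsup := congrArg (fun p : T.Path c z => c' ∈ p.1.support) this
  simp only [eq_iff_iff] at hsup
  apply hns1'
  rw [← List.mem_reverse, ← Walk.support_reverse]
  refine hsup.2 ?_
  simp [Walk.support_cons, Walk.support_reverse]

lemma claimB (hconn : T.Connected) {c' : V} (hadj : T.Adj c c') {z : V} (hzc' : z ≠ c')
    (hz : vcmp T c' z ≠ vcmp T c' c) : vcmp T c z = vcmp T c c' := by
  by_cases hzc : z = c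
  · exact absurd (hzc ▸ rfl) hz
  obtain ⟨w⟩ := hconn.preconnected z c
  have hc'mem : c' ∈ w.toPath.1.support := by
    by_contra hmem
    exact hz (vcmp_eq_of_walk_avoid w.toPath.1 hmem)
  obtain ⟨w', hw'⟩ := path_avoid_end w.toPath.1 w.toPath.2 hc'mem hadj.ne'
  exact vcmp_eq_of_walk_avoid w' hw'

lemma exists_centroid (hT : T.IsTree) :
    ∃ c : V, ∀ v : V, v ≠ c → 2 * (compFinset T c (vcmp T c v)).card ≤ Fintype.card V := by
  classical
  have hne : Nonempty V := hT.isConnected.nonempty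
  set g : V → ℕ := fun u => (Finset.univ.filter (· ≠ u)).sup
    (fun w => (compFinset T u (vcmp T u w)).card) with hg
  obtain ⟨c, -, hmin⟩ := Finset.exists_min_image Finset.univ g Finset.univ_nonempty
  refine ⟨c, ?_⟩
  by_contra hcon
  push_neg at hcon
  obtain ⟨v, hvc, hbig⟩ := hcon
  set K := vcmp T c v with hKdef
  set D := compFinset T c K with hD
  set s := D.card with hs
  have hvD : v ∈ D := mem_compFinset.2 rfl
  have hs1 : 1 ≤ s := Finset.card_pos.2 ⟨v, hvD⟩
  have hsn : s ≤ Fintype.card V := by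
    simpa using Finset.card_le_univ D
  obtain ⟨c', hadj, hK⟩ := exists_adj_comp hT.isConnected hvc
  have hgc : s ≤ g c := by
    have hv' : v ∈ Finset.univ.filter (· ≠ c) := by simp [hvc]
    exact Finset.le_sup (f := fun w => (compFinset T c (vcmp T c w)).card) hv'
  have hlt : g c' < s := by
    rw [hg]
    rw [Finset.sup_lt_iff (show ⊥ < s from hs1)]
    intro w hw
    rw [Finset.mem_filter] at hw
    by_cases hwc : vcmp T c' w = vcmp T c' c
    · have hsub : compFinset T c' (vcmp T c' w) ⊆ Finset.univ \ D := by
        intro z hz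
        rw [mem_compFinset, hwc] at hz
        have hzD := claimA hT.2 hadj hz
        rw [hK] at hzD
        rw [Finset.mem_sdiff]
        exact ⟨Finset.mem_univ _, fun hmem => hzD (mem_compFinset.1 hmem)⟩
      have := Finset.card_le_card hsub
      rw [Finset.card_sdiff_of_subset (Finset.subset_univ D)] at this
      simp only [Finset.card_univ] at this
      omega
    · have hsub : compFinset T c' (vcmp T c' w) ⊆ D.erase c' := by
        intro z hz
        rw [mem_compFinset] at hz
        have hzc' : z ≠ c' := by
          rintro rfl
          exact hw.2 (eq_c_of_vcmp_eq hz.symm)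
        have := claimB hT.isConnected hadj hzc' (hz.symm ▸ hwc : vcmp T c' z ≠ vcmp T c' c)
        rw [hK] at this
        exact Finset.mem_erase.2 ⟨hzc', mem_compFinset.2 this⟩
      have := Finset.card_le_card hsub
      rw [Finset.card_erase_of_mem (mem_compFinset.2 (hKdef ▸ hK))] at this
      rw [show compFinset T c (vcmp T c v) = D by rw [hD, hKdef]] at this
      omega
  have := hmin c' (Finset.mem_univ _)
  omega

section Route

variable (T) (c) {k : ℕ} (t : Fin k → V)

open scoped Classical in
/-- the indices of terminals lying in component `K` -/
noncomputable def sK (K : (delV T c).ConnectedComponent) : Finset (Fin k) :=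
  Finset.univ.filter (fun i => vcmp T c (t i) = K)

lemma mem_sK {K : (delV T c).ConnectedComponent} {i : Fin k} :
    i ∈ sK T c t K ↔ vcmp T c (t i) = K := by
  classical simp [sK]

noncomputable def eqv (K : (delV T c).ConnectedComponent) :
    Fin (sK T c t K).card ≃o sK T c t K := (sK T c t K).orderIsoOfFin rfl

noncomputable def tK (K : (delV T c).ConnectedComponent) (m : Fin (sK T c t K).card) :
    (↑(compFinset T c K) : Set V) :=
  ⟨t ↑(eqv T c t K m), by
    have := (eqv T c t K m).2
    rw [mem_sK] at this
    exact Finset.mem_coe.2 (mem_compFinset.2 this)⟩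

lemma tK_val (K : (delV T c).ConnectedComponent) (m : Fin (sK T c t K).card) :
    (tK T c t K m).1 = t ↑(eqv T c t K m) := rfl

noncomputable def Fir (i : Fin k) : Fin k :=
  (sK T c t (vcmp T c (t i))).min' ⟨i, (mem_sK _ _ _).2 rfl⟩

lemma Fir_le (i : Fin k) : Fir T c t i ≤ i := Finset.min'_le _ _ ((mem_sK _ _ _).2 rfl)

lemma Fir_mem (i : Fin k) : vcmp T c (t (Fir T c t i)) = vcmp T c (t i) := by
  have := Finset.min'_mem (sK T c t (vcmp T c (t i))) ⟨i, (mem_sK _ _ _).2 rfl⟩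
  rw [mem_sK] at this
  exact this

lemma Fir_eq_of_comp_eq {i l : Fin k} (h : vcmp T c (t i) = vcmp T c (t l)) :
    Fir T c t i = Fir T c t l := by
  unfold Fir
  congr 1
  rw [h]

/-- a participant with component `K` is the minimum of `sK K` -/
lemma part_eq_min {i : Fin k} (hpart : Fir T c t i = i) {K : (delV T c).ConnectedComponent}
    (hK : vcmp T c (t i) = K) (hne : (sK T c t K).Nonempty) :
    i = (sK T c t K).min' hne := by
  rw [← hpart]
  unfold Fir
  congr 1
  rw [hK]

open scoped Classical in
noncomputable def prevF (i : Fin k) : Fin k :=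
  if h : (Finset.univ.filter (fun l => Fir T c t l = l ∧ l < i)).Nonempty
  then (Finset.univ.filter (fun l => Fir T c t l = l ∧ l < i)).max' h else i

lemma Fir_zero (i : Fin k) (h0 : i.val = 0) : Fir T c t i = i := by
  have h := Fir_le T c t i
  have : (Fir T c t i).val ≤ i.val := h
  exact Fin.ext (by omega)

lemma prevSet_nonempty {i : Fin k} (hi : 0 < i.val) :
    (Finset.univ.filter (fun l => Fir T c t l = l ∧ l < i)).Nonempty := by
  classical
  refine ⟨⟨0, Nat.lt_of_le_of_lt (Nat.zero_le _) i.isLt⟩, ?_⟩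
  rw [Finset.mem_filter]
  exact ⟨Finset.mem_univ _, Fir_zero T c t _ rfl, by rwa [Fin.lt_def]⟩

lemma prevF_spec {i : Fin k} (hi : 0 < i.val) :
    Fir T c t (prevF T c t i) = prevF T c t i ∧ prevF T c t i < i := by
  classical
  have h := prevSet_nonempty T c t (i := i) hi
  have hmem := (Finset.univ.filter (fun l => Fir T c t l = l ∧ l < i)).max'_mem h
  rw [Finset.mem_filter] at hmem
  unfold prevF
  rw [dif_pos h]
  exact hmem.2

lemma le_prevF {i l : Fin k} (hi : 0 < i.val) (hl : Fir T c t l = l) (hli : l < i) :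
    l ≤ prevF T c t i := by
  classical
  have h := prevSet_nonempty T c t (i := i) hi
  unfold prevF
  rw [dif_pos h]
  exact Finset.le_max' _ _ (by rw [Finset.mem_filter]; exact ⟨Finset.mem_univ _, hl, hli⟩)

end Route

section Route2

variable (T) (c : V) {k : ℕ} (t : Fin k → V)

variable (RT : ∀ K : (delV T c).ConnectedComponent, ∀ m : Fin (sK T c t K).card,
  Σ l : Fin (sK T c t K).card,
    (T.induce (↑(compFinset T c K) : Set V)).Path (tK T c t K m) (tK T c t K l))

noncomputable def treePath (hconn : T.Connected) (x y : V) : T.Path x y :=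
  (hconn.preconnected x y).some.toPath

noncomputable def route (hconn : T.Connected) (i : Fin k) : Σ l : Fin k, T.Path (t i) (t l) :=
  if hpart : Fir T c t i = i then
    if h0 : 0 < i.val then
      ⟨prevF T c t i, treePath T hconn _ _⟩
    else ⟨i, ⟨Walk.nil, Walk.IsPath.nil⟩⟩
  else
    ⟨↑(eqv T c t (vcmp T c (t i))
        (RT (vcmp T c (t i)) ((eqv T c t (vcmp T c (t i))).symm ⟨i, (mem_sK _ _ _).2 rfl⟩)).1),
     ⟨((RT (vcmp T c (t i)) ((eqv T c t (vcmp T c (t i))).symm ⟨i, (mem_sK _ _ _).2 rfl⟩)).2.1.map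
          (inducedHom T _)).copy
        (by rw [inducedHom_apply, tK_val]; exact congrArg t (congrArg Subtype.val
          ((eqv T c t (vcmp T c (t i))).apply_symm_apply ⟨i, (mem_sK _ _ _).2 rfl⟩)))
        (by rw [inducedHom_apply, tK_val]),
      by
        rw [Walk.isPath_copy]
        exact Walk.map_isPath_of_injective Subtype.val_injective
          (RT (vcmp T c (t i)) _).2.2⟩⟩

lemma route_part_fst (hconn : T.Connected) {i : Fin k} (hpart : Fir T c t i = i)
    (h0 : 0 < i.val) : (route T c t RT hconn i).1 = prevF T c t i := by
  rw [route, dif_pos hpart, dif_pos h0]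

lemma route_nonpart (hconn : T.Connected) {i : Fin k} (hpart : ¬ Fir T c t i = i) :
    (route T c t RT hconn i).1 =
      ↑(eqv T c t (vcmp T c (t i))
        (RT (vcmp T c (t i)) ((eqv T c t (vcmp T c (t i))).symm ⟨i, (mem_sK _ _ _).2 rfl⟩)).1) ∧
    (route T c t RT hconn i).2.1.edges =
      ((RT (vcmp T c (t i))
          ((eqv T c t (vcmp T c (t i))).symm ⟨i, (mem_sK _ _ _).2 rfl⟩)).2.1.edges).map
        (Sym2.map Subtype.val) := by
  rw [route, dif_neg hpart]
  exact ⟨rfl, by rw [Walk.edges_copy, Walk.edges_map]; rfl⟩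


lemma eqv_coe_zero (K : (delV T c).ConnectedComponent) (h : 0 < (sK T c t K).card) :
    ↑↑(eqv T c t K ⟨0, h⟩) = (sK T c t K).min' (Finset.card_pos.1 h) := by
  unfold eqv
  rw [Finset.coe_orderIsoOfFin_apply]
  exact Finset.orderEmbOfFin_zero rfl h

lemma min'_part {i : Fin k} (hmin : i = (sK T c t (vcmp T c (t i))).min'
    ⟨i, (mem_sK _ _ _).2 rfl⟩) : Fir T c t i = i := by
  unfold Fir
  exact hmin.symm

lemma nonpart_pos {i : Fin k} (hpart : ¬ Fir T c t i = i) :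
    0 < (((eqv T c t (vcmp T c (t i))).symm ⟨i, (mem_sK _ _ _).2 rfl⟩) :
      Fin (sK T c t (vcmp T c (t i))).card).val := by
  by_contra h0
  push_neg at h0
  apply hpart
  set K := vcmp T c (t i) with hK
  set m := (eqv T c t K).symm ⟨i, (mem_sK _ _ _).2 rfl⟩ with hm
  have hm0 : m = ⟨0, m.pos⟩ := Fin.ext (Nat.le_zero.1 h0)
  have h2 : (⟨i, (mem_sK _ _ _).2 rfl⟩ : sK T c t K) = eqv T c t K ⟨0, m.pos⟩ := by
    rw [← hm0, hm, OrderIso.apply_symm_apply]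
  have hival : i = ↑↑(eqv T c t K ⟨0, m.pos⟩) := congrArg Subtype.val h2
  apply min'_part
  rw [eqv_coe_zero T c t K m.pos] at hival
  exact hival.trans (by congr 1)


lemma route_nonpart_B (hconn : T.Connected) {i : Fin k} (hpart : ¬ Fir T c t i = i)
    {K : (delV T c).ConnectedComponent} (hK : vcmp T c (t i) = K) :
    ∃ m : Fin (sK T c t K).card, ((eqv T c t K m : sK T c t K) : Fin k) = i ∧ 0 < m.val ∧
      (route T c t RT hconn i).2.1.edges =
        ((RT K m).2.1.edges).map (Sym2.map Subtype.val) := by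
  subst hK
  refine ⟨(eqv T c t (vcmp T c (t i))).symm ⟨i, (mem_sK _ _ _).2 rfl⟩, ?_, ?_, ?_⟩
  · rw [OrderIso.apply_symm_apply]
  · exact nonpart_pos T c t hpart
  · exact (route_nonpart T c t RT hconn hpart).2

lemma route_lt (hconn : T.Connected)
    (hRT : ∀ K m, 0 < (m : Fin (sK T c t K).card).val → ((RT K m).1).val < m.val)
    (i : Fin k) (hi : 0 < i.val) : ((route T c t RT hconn i).1).val < i.val := by
  by_cases hpart : Fir T c t i = i
  · rw [route_part_fst T c t RT hconn hpart hi]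
    exact (prevF_spec T c t hi).2
  · rw [(route_nonpart T c t RT hconn hpart).1]
    set K := vcmp T c (t i) with hK
    set m := (eqv T c t K).symm ⟨i, (mem_sK _ _ _).2 rfl⟩ with hm
    have h1 : ((RT K m).1).val < m.val := hRT K m (nonpart_pos T c t hpart)
    have h2 : eqv T c t K (RT K m).1 < eqv T c t K m := (eqv T c t K).strictMono (Fin.lt_def.2 h1)
    have h3 : (↑(eqv T c t K (RT K m).1) : Fin k) < ↑(eqv T c t K m) := h2
    have h4 : (↑(eqv T c t K m) : Fin k) = i := by
      rw [hm, OrderIso.apply_symm_apply]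
    rw [h4] at h3
    exact h3
end Route2

set_option maxHeartbeats 1000000 in
lemma main_lemma : ∀ (n : ℕ) (V : Type) [Fintype V] (T : SimpleGraph V), T.IsTree →
    Fintype.card V ≤ n → ∀ (k : ℕ) (t : Fin k → V),
      ∃ (j : Fin k → Fin k) (q : ∀ i : Fin k, T.Path (t i) (t (j i))),
        (∀ i : Fin k, 0 < i.val → (j i).val < i.val) ∧
        ∀ e ∈ T.edgeSet,
          (Finset.univ.filter fun i : Fin k =>
              0 < i.val ∧ e ∈ (q i : T.Walk (t i) (t (j i))).edges).card
            ≤ 2 * Nat.log 2 (Fintype.card V) := by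
  intro n
  induction n using Nat.strong_induction_on with
  | _ n ih =>
  intro V _ T hT hcard k t
  by_cases hbase : Fintype.card V ≤ 1
  · have hsub : Subsingleton V := Fintype.card_le_one_iff_subsingleton.1 hbase
    have hteq : ∀ i l : Fin k, t i = t l := fun i l => Subsingleton.elim _ _
    refine ⟨fun i => ⟨0, Nat.lt_of_le_of_lt (Nat.zero_le _) i.isLt⟩,
      fun i => ⟨Walk.nil.copy rfl (hteq i _), by rw [Walk.isPath_copy]; exact Walk.IsPath.nil⟩,
      ?_, ?_⟩
    · intro i hi
      exact hi
    · intro e he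
      exfalso
      induction e with
      | _ u v => exact (T.mem_edgeSet.1 he).ne (Subsingleton.elim _ _)
  · push_neg at hbase
    obtain ⟨c, hcent⟩ := exists_centroid hT
    have hcardcoe : ∀ K : (delV T c).ConnectedComponent,
        Fintype.card ↥(↑(compFinset T c K) : Set V) = (compFinset T c K).card :=
      fun K => Fintype.card_of_subtype (compFinset T c K) (by simp)
    have hcomp_half : ∀ K : (delV T c).ConnectedComponent, K ≠ vcmp T c c →
        2 * (compFinset T c K).card ≤ Fintype.card V := by
      intro K hK
      obtain ⟨v, hv⟩ := K.exists_rep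
      have hvc : v ≠ c := by
        rintro rfl
        exact hK hv.symm
      have := hcent v hvc
      rwa [show vcmp T c v = K from hv] at this
    have hcomp_lt : ∀ K : (delV T c).ConnectedComponent,
        Fintype.card ↥(↑(compFinset T c K) : Set V) < Fintype.card V := by
      intro K
      rw [hcardcoe K]
      by_cases hK : K = vcmp T c c
      · rw [hK, compFinset_c]
        simp only [Finset.card_singleton]
        omega
      · have h1 := hcomp_half K hK
        have h2 : 1 ≤ (compFinset T c K).card := Finset.card_pos.2 (compFinset_nonempty K)
        omega
    have hIH := fun K : (delV T c).ConnectedComponent =>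
      ih _ (lt_of_lt_of_le (hcomp_lt K) hcard) _ _ (induce_comp_isTree hT K) le_rfl
        (sK T c t K).card (tK T c t K)
    choose j' q' hord' hcong' using hIH
    set RT : ∀ K : (delV T c).ConnectedComponent, ∀ m : Fin (sK T c t K).card,
        Σ l : Fin (sK T c t K).card,
          (T.induce (↑(compFinset T c K) : Set V)).Path (tK T c t K m) (tK T c t K l) :=
      fun K m => ⟨j' K m, q' K m⟩ with hRTdef
    refine ⟨fun i => (route T c t RT hT.isConnected i).1,
      fun i => (route T c t RT hT.isConnected i).2,
      route_lt T c t RT hT.isConnected (fun K m hm => hord' K m hm), ?_⟩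
    intro e he
    have hlog1 : 1 ≤ Nat.log 2 (Fintype.card V) := Nat.log_pos (by norm_num) hbase
    suffices H : ∀ u v : V, T.Adj u v → v ≠ c →
        (Finset.univ.filter fun i : Fin k =>
          0 < i.val ∧ s(u, v) ∈ ((route T c t RT hT.isConnected i).2 :
            T.Walk (t i) (t (route T c t RT hT.isConnected i).1)).edges).card
          ≤ 2 * Nat.log 2 (Fintype.card V) by
      induction e with
      | _ u v =>
        have hadj : T.Adj u v := T.mem_edgeSet.1 he
        by_cases hv : v = c
        · have hu : u ≠ c := fun huc => hadj.ne (huc.trans hv.symm)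
          rw [Sym2.eq_swap]
          exact H v u hadj.symm hu
        · exact H u v hadj hv
    intro u v hadj hvc
    set K0 := vcmp T c v with hK0
    have hK0c : K0 ≠ vcmp T c c := fun h => hvc (eq_c_of_vcmp_eq h)
    have hkey : ∀ z, z ∈ (s(u,v) : Sym2 V) → z ≠ c → vcmp T c z = K0 := by
      intro z hz hznc
      rcases Sym2.mem_iff.1 hz with rfl | rfl
      · exact vcmp_eq_of_adj hadj hznc hvc
      · rfl
    classical
    set jf := fun i => (route T c t RT hT.isConnected i).1 with hjf
    set qf := fun i => (route T c t RT hT.isConnected i).2 with hqf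
    set A := Finset.univ.filter (fun i : Fin k =>
      0 < i.val ∧ s(u, v) ∈ (qf i).1.edges) with hA
    set A1 := Finset.univ.filter (fun i : Fin k =>
      Fir T c t i = i ∧ vcmp T c (t i) = K0) with hA1
    set A2 := Finset.univ.filter (fun i : Fin k =>
      Fir T c t i = i ∧ 0 < i.val ∧ vcmp T c (t (jf i)) = K0) with hA2
    set A3 := Finset.univ.filter (fun i : Fin k =>
      ¬ Fir T c t i = i ∧ 0 < i.val ∧ s(u, v) ∈ (qf i).1.edges) with hA3
    have hsubset : A ⊆ A1 ∪ A2 ∪ A3 := by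
      intro i hi
      rw [hA, Finset.mem_filter] at hi
      obtain ⟨-, hi0, hie⟩ := hi
      by_cases hpart : Fir T c t i = i
      · obtain ⟨z, hze, hzc, hz⟩ := edge_comp (qf i).1 (qf i).2 hie
        have hzK0 := hkey z hze hzc
        rcases hz with hz | hz
        · refine Finset.mem_union_left _ (Finset.mem_union_left _ ?_)
          rw [hA1, Finset.mem_filter]
          exact ⟨Finset.mem_univ _, hpart, hzK0 ▸ hz.symm⟩
        · refine Finset.mem_union_left _ (Finset.mem_union_right _ ?_)
          rw [hA2, Finset.mem_filter]
          exact ⟨Finset.mem_univ _, hpart, hi0, hzK0 ▸ hz.symm⟩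
      · refine Finset.mem_union_right _ ?_
        rw [hA3, Finset.mem_filter]
        exact ⟨Finset.mem_univ _, hpart, hi0, hie⟩
    have hcard1 : A1.card ≤ 1 := by
      rw [Finset.card_le_one]
      intro i1 h1 i2 h2
      rw [hA1, Finset.mem_filter] at h1 h2
      have hne : (sK T c t K0).Nonempty := ⟨i1, (mem_sK _ _ _).2 h1.2.2⟩
      rw [part_eq_min T c t h1.2.1 h1.2.2 hne, part_eq_min T c t h2.2.1 h2.2.2 hne]
    have hprev_eq : ∀ i : Fin k, Fir T c t i = i → 0 < i.val → jf i = prevF T c t i := by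
      intro i hpart hi0
      rw [hjf]
      exact route_part_fst T c t RT hT.isConnected hpart hi0
    have hcard2 : A2.card ≤ 1 := by
      rw [Finset.card_le_one]
      intro i1 h1 i2 h2
      rw [hA2, Finset.mem_filter] at h1 h2
      by_contra hne12
      -- both prevF are the unique participant of K0, but prevF is injective on participants
      have key : ∀ i1 i2 : Fin k, i1 < i2 →
          (Fir T c t i1 = i1 ∧ 0 < i1.val ∧ vcmp T c (t (jf i1)) = K0) →
          (Fir T c t i2 = i2 ∧ 0 < i2.val ∧ vcmp T c (t (jf i2)) = K0) → False := by
        intro i1 i2 hlt h1 h2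
        have hp1 := prevF_spec T c t h1.2.1
        have hp2 := prevF_spec T c t h2.2.1
        have he1 : jf i1 = prevF T c t i1 := hprev_eq i1 h1.1 h1.2.1
        have he2 : jf i2 = prevF T c t i2 := hprev_eq i2 h2.1 h2.2.1
        have hnex : (sK T c t K0).Nonempty := ⟨jf i1, (mem_sK _ _ _).2 h1.2.2⟩
        have hm1 : prevF T c t i1 = (sK T c t K0).min' hnex := by
          rw [← he1]
          exact part_eq_min T c t (he1 ▸ hp1.1) h1.2.2 hnex
        have hm2 : prevF T c t i2 = (sK T c t K0).min' hnex := by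
          rw [← he2]
          exact part_eq_min T c t (he2 ▸ hp2.1) h2.2.2 hnex
        have hge : i1 ≤ prevF T c t i2 := le_prevF T c t h2.2.1 h1.1 hlt
        have : prevF T c t i1 < i1 := hp1.2
        rw [hm1] at this
        rw [hm2] at hge
        exact absurd (lt_of_le_of_lt hge this) (lt_irrefl _)
      rcases lt_trichotomy i1 i2 with hlt | heq | hlt
      · exact key i1 i2 hlt h1.2 h2.2
      · exact hne12 heq
      · exact key i2 i1 hlt h2.2 h1.2
    -- analysis of non-participant uses
    have hA3analysis : ∀ i ∈ A3, u ≠ c ∧ vcmp T c (t i) = K0 ∧ u ∈ compFinset T c K0 := by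
      intro i hi
      rw [hA3, Finset.mem_filter] at hi
      obtain ⟨-, hpart, hi0, hie⟩ := hi
      have hedges := (route_nonpart T c t RT hT.isConnected hpart).2
      rw [hqf] at hie
      rw [hedges, List.mem_map] at hie
      obtain ⟨e'', he''mem, he''eq⟩ := hie
      -- endpoints of e'' lie in compFinset (vcmp (t i))
      set K := vcmp T c (t i) with hK
      have hends : ∀ z, z ∈ (s(u,v) : Sym2 V) → z ∈ compFinset T c K := by
        intro z hz
        rw [← he''eq, Sym2.mem_map] at hz
        obtain ⟨w, hw, rfl⟩ := hz
        exact Finset.mem_coe.1 w.2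
      have hvK : vcmp T c v = K := mem_compFinset.1 (hends v (Sym2.mem_mk_right _ _))
      have hKK0 : K = K0 := by rw [hK0, hvK]
      have huc : u ≠ c := by
        intro huc
        have h5 := mem_compFinset.1 (hends u (Sym2.mem_mk_left _ _))
        rw [huc] at h5
        exact hK0c (by rw [hKK0.symm, ← h5])
      refine ⟨huc, hKK0, ?_⟩
      rw [← hKK0]
      exact hends u (Sym2.mem_mk_left _ _)
    have hcard3 : A3.card ≤ 2 * Nat.log 2 (Fintype.card V) - 2 := by
      rcases Finset.eq_empty_or_nonempty A3 with hemp | ⟨i0, hi0mem⟩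
      · rw [hemp]; simp
      obtain ⟨huc, hi0K0, huK0⟩ := hA3analysis i0 hi0mem
      have hsne : i0 ∈ sK T c t K0 := (mem_sK _ _ _).2 hi0K0
      have hpos : 0 < (sK T c t K0).card := Finset.card_pos.2 ⟨i0, hsne⟩
      have hvK0 : v ∈ compFinset T c K0 := mem_compFinset.2 rfl
      set e' : Sym2 ↥(↑(compFinset T c K0) : Set V) :=
        s(⟨u, Finset.mem_coe.2 huK0⟩, ⟨v, Finset.mem_coe.2 hvK0⟩) with he'def
      have he'edge : e' ∈ (T.induce (↑(compFinset T c K0) : Set V)).edgeSet := by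
        rw [he'def, SimpleGraph.mem_edgeSet]
        exact hadj
      have he'map : Sym2.map (Subtype.val) e' = s(u, v) := by
        rw [he'def, Sym2.map_pair_eq]
      have hB := hcong' K0 e' he'edge
      rw [hcardcoe K0] at hB
      have hinj : A3.card ≤ 2 * Nat.log 2 ((compFinset T c K0).card) := by
        refine le_trans ?_ hB
        apply Finset.card_le_card_of_injOn
          (fun i => if h : ∃ m : Fin (sK T c t K0).card,
            ((eqv T c t K0 m : sK T c t K0) : Fin k) = i then h.choose else ⟨0, hpos⟩)
        · intro i hi
          obtain ⟨-, hiK0, -⟩ := hA3analysis i hi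
          rw [Finset.mem_coe, hA3, Finset.mem_filter] at hi
          obtain ⟨-, hpart, hip, hie⟩ := hi
          obtain ⟨m, hm1, hm2, hm3⟩ :=
            route_nonpart_B T c t RT hT.isConnected hpart hiK0
          have hex : ∃ m' : Fin (sK T c t K0).card,
              ((eqv T c t K0 m' : sK T c t K0) : Fin k) = i := ⟨m, hm1⟩
          have hchoose : hex.choose = m := by
            have h1 := hex.choose_spec
            have : (eqv T c t K0) hex.choose = (eqv T c t K0) m := by
              apply Subtype.ext
              rw [h1, hm1]
            exact (eqv T c t K0).injective this
          dsimp only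
          rw [dif_pos hex, hchoose]
          simp only [Finset.mem_coe, Finset.mem_filter]
          refine ⟨Finset.mem_univ _, hm2, ?_⟩
          rw [hqf] at hie
          rw [hm3, List.mem_map] at hie
          obtain ⟨e'', he''mem, he''eq⟩ := hie
          have : e'' = e' := Sym2.map.injective Subtype.val_injective
            (he''eq.trans he'map.symm)
          rw [← this]
          exact he''mem
        · intro i1 h1 i2 h2 hf
          rw [Finset.mem_coe] at h1 h2
          obtain ⟨-, h1K0, -⟩ := hA3analysis i1 h1
          obtain ⟨-, h2K0, -⟩ := hA3analysis i2 h2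
          rw [hA3, Finset.mem_filter] at h1 h2
          obtain ⟨m1, hm11, -, -⟩ :=
            route_nonpart_B T c t RT hT.isConnected h1.2.1 h1K0
          obtain ⟨m2, hm21, -, -⟩ :=
            route_nonpart_B T c t RT hT.isConnected h2.2.1 h2K0
          have hex1 : ∃ m' : Fin (sK T c t K0).card,
              ((eqv T c t K0 m' : sK T c t K0) : Fin k) = i1 := ⟨m1, hm11⟩
          have hex2 : ∃ m' : Fin (sK T c t K0).card,
              ((eqv T c t K0 m' : sK T c t K0) : Fin k) = i2 := ⟨m2, hm21⟩
          simp only [dif_pos hex1, dif_pos hex2] at hf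
          rw [← hex1.choose_spec, ← hex2.choose_spec, hf]
      -- bound card B
      have hsc := hcomp_half K0 hK0c
      have hhalf : (compFinset T c K0).card ≤ Fintype.card V / 2 :=
        Nat.le_div_iff_mul_le (by norm_num) |>.2 (by omega)
      have hmono := Nat.log_mono_right (b := 2) hhalf
      have hdb : Nat.log 2 (Fintype.card V / 2) = Nat.log 2 (Fintype.card V) - 1 :=
        Nat.log_div_base _ _
      have hfin : Nat.log 2 ((compFinset T c K0).card) ≤ Nat.log 2 (Fintype.card V) - 1 := by
        rw [← hdb]
        exact hmono
      refine le_trans hinj ?_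
      omega
    have := Finset.card_le_card hsubset
    have hunion := (Finset.card_union_le (A1 ∪ A2) A3)
    have hunion2 := (Finset.card_union_le A1 A2)
    omega

/-- For any tree `T` with `n` vertices and any sequence of vertices
`t₁, …, t_k` in `T`, there exists a set of simple paths `q₁, …, q_{k-1}` such that
`qᵢ` connects `t_{i+1}` to some `t_j` with `j ≤ i`, and each edge of `T` belongs to
at most `C * log n` of the paths, for an absolute constant `C`.
(0-based: round `i` with `0 < i` gets a path to an earlier round `j i < i`.) -/
theorem online_tree_routing_log_congestion :
    ∃ C : ℝ, 0 < C ∧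
      ∀ (V : Type) [Fintype V] (T : SimpleGraph V), T.IsTree →
        ∀ (k : ℕ) (t : Fin k → V),
          ∃ (j : Fin k → Fin k) (q : ∀ i : Fin k, T.Path (t i) (t (j i))),
            (∀ i : Fin k, 0 < i.val → (j i).val < i.val) ∧
            ∀ e ∈ T.edgeSet,
              ((Finset.univ.filter fun i : Fin k =>
                  0 < i.val ∧ e ∈ (q i : T.Walk (t i) (t (j i))).edges).card : ℝ)
                ≤ C * Real.log (Fintype.card V) := by
  refine ⟨2 / Real.log 2, by positivity, ?_⟩
  intro V _ T hT k t
  obtain ⟨j, q, hord, hcong⟩ :=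
    main_lemma (Fintype.card V) V T hT le_rfl k t
  refine ⟨j, q, hord, ?_⟩
  intro e he
  have hcount := hcong e he
  have hnon : Nonempty V := hT.isConnected.nonempty
  have hn1 : 1 ≤ Fintype.card V := Fintype.card_pos
  have hpow : (2:ℕ) ^ Nat.log 2 (Fintype.card V) ≤ Fintype.card V :=
    Nat.pow_log_le_self 2 (by omega)
  have hlog2pos : 0 < Real.log 2 := Real.log_pos (by norm_num)
  have hlog : (Nat.log 2 (Fintype.card V) : ℝ) * Real.log 2 ≤ Real.log (Fintype.card V) := by
    have h2 : ((2:ℝ)) ^ (Nat.log 2 (Fintype.card V)) ≤ (Fintype.card V : ℝ) := by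
      exact_mod_cast hpow
    have h3 := Real.log_le_log (by positivity) h2
    rwa [Real.log_pow] at h3
  calc ((Finset.univ.filter fun i : Fin k =>
          0 < i.val ∧ e ∈ (q i : T.Walk (t i) (t (j i))).edges).card : ℝ)
      ≤ ((2 * Nat.log 2 (Fintype.card V) : ℕ) : ℝ) := by exact_mod_cast hcount
    _ = 2 * (Nat.log 2 (Fintype.card V) : ℝ) := by push_cast; ring
    _ ≤ 2 / Real.log 2 * Real.log (Fintype.card V) := by
        rw [div_mul_eq_mul_div, le_div_iff₀ hlog2pos]
        calc 2 * (Nat.log 2 (Fintype.card V) : ℝ) * Real.log 2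
            = 2 * ((Nat.log 2 (Fintype.card V) : ℝ) * Real.log 2) := by ring
          _ ≤ 2 * Real.log (Fintype.card V) := by linarith [hlog]
end

section
/- On the path graph with n vertices (vertices 1,…,n in a line), for every online prediction algorithm there exists an adversarial labeling ℓ : V → {−1,+1} with |cut(ℓ)| = 1 and an adversarial query sequence forcing the algorithm to make at least Ω(log n) mistakes. -/
open Classical Finset

namespace PGB

variable {m : ℕ}

def vtx (m k : ℕ) : Fin (m+2) := ⟨min k (m+1), Nat.lt_succ_of_le (min_le_right _ _)⟩

lemma vtx_val {k : ℕ} (hk : k ≤ m+1) : (vtx m k).val = k := by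
  simp [vtx, hk]

variable (A : List (Fin (m+2) × ℤ) → Fin (m+2) → ℤ)

def sgn : ℤ := if A [] (vtx m 0) = 1 then -1 else 1

lemma sgn_cases : sgn A = 1 ∨ sgn A = -1 := by
  unfold sgn; split <;> simp

lemma sgn_ne_neg : sgn A ≠ -(sgn A) := by
  rcases sgn_cases A with h | h <;> rw [h] <;> decide

lemma first_mistake : A [] (vtx m 0) ≠ sgn A := by
  unfold sgn; split <;> simp_all

def step (st : List (Fin (m+2) × ℤ) × ℕ × ℕ) : List (Fin (m+2) × ℤ) × ℕ × ℕ :=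
  let mid := (st.2.1 + st.2.2) / 2
  if A st.1 (vtx m mid) = sgn A then (st.1 ++ [(vtx m mid, -(sgn A))], st.2.1, mid)
  else (st.1 ++ [(vtx m mid, sgn A)], mid, st.2.2)

def st (j : ℕ) : List (Fin (m+2) × ℤ) × ℕ × ℕ :=
  (step A)^[j] ([(vtx m 0, sgn A)], 0, m+1)

lemma st_succ (j : ℕ) : st A (j+1) = step A (st A j) :=
  Function.iterate_succ_apply' _ _ _

lemma invariant (j : ℕ) :
    (st A j).1.length = j + 1 ∧ (st A j).2.1 ≤ (st A j).2.2 ∧ (st A j).2.2 ≤ m + 1 ∧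
    (m+1) / 2^j ≤ (st A j).2.2 - (st A j).2.1 ∧
    (∀ p ∈ (st A j).1,
      (p.2 = sgn A ∧ p.1.val ≤ (st A j).2.1) ∨ (p.2 = -(sgn A) ∧ (st A j).2.2 ≤ p.1.val)) := by
  induction j with
  | zero =>
    refine ⟨rfl, by simp [st], by simp [st], by simp [st], ?_⟩
    intro p hp
    simp only [st, Function.iterate_zero, id, List.mem_singleton] at hp
    subst hp
    exact Or.inl ⟨rfl, by simp [st, vtx]⟩
  | succ j ih =>
    obtain ⟨hlen, hlohi, hhi, hgap, hcons⟩ := ih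
    have hhalf : (m+1) / 2^(j+1) ≤ ((st A j).2.2 - (st A j).2.1) / 2 := by
      rw [pow_succ, ← Nat.div_div_eq_div_mul]
      exact Nat.div_le_div_right hgap
    rw [st_succ]
    unfold step
    dsimp only
    split
    · dsimp only
      refine ⟨by simp [hlen], by omega, by omega, by omega, ?_⟩
      intro p hp
      simp only [List.mem_append, List.mem_singleton] at hp
      rcases hp with hp | hp
      · rcases hcons p hp with h | h
        · exact Or.inl h
        · exact Or.inr ⟨h.1, by omega⟩
      · subst hp
        exact Or.inr ⟨rfl, by rw [vtx_val (by omega)]⟩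
    · dsimp only
      refine ⟨by simp [hlen], by omega, by omega, by omega, ?_⟩
      intro p hp
      simp only [List.mem_append, List.mem_singleton] at hp
      rcases hp with hp | hp
      · rcases hcons p hp with h | h
        · exact Or.inl ⟨h.1, by omega⟩
        · exact Or.inr h
      · subst hp
        exact Or.inl ⟨rfl, by rw [vtx_val (by omega)]⟩

lemma hist_prefix (j : ℕ) : ∀ j', j ≤ j' → (st A j).1 = ((st A j').1).take (j+1) := by
  intro j' hj
  induction j' with
  | zero =>
    interval_cases j
    have := (invariant A 0).1
    rw [List.take_of_length_le (by omega)]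
  | succ j' ih =>
    rcases Nat.lt_or_ge j (j'+1) with h | h
    · have hlen := (invariant A j').1
      rw [st_succ]
      unfold step
      dsimp only
      split
      · dsimp only
        rw [List.take_append_of_le_length (by omega)]
        exact ih (by omega)
      · dsimp only
        rw [List.take_append_of_le_length (by omega)]
        exact ih (by omega)
    · have : j = j' + 1 := by omega
      subst this
      rw [List.take_of_length_le (by rw [(invariant A (j'+1)).1])]

lemma step_mistake (j : ℕ) : ∃ p : Fin (m+2) × ℤ,
    (st A (j+1)).1 = (st A j).1 ++ [p] ∧ A (st A j).1 p.1 ≠ p.2 := by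
  rw [st_succ]
  unfold step
  dsimp only
  split
  · next h => exact ⟨_, rfl, fun hc => sgn_ne_neg A (h.symm.trans hc)⟩
  · next h => exact ⟨_, rfl, h⟩

lemma entry_one (r : ℕ) (h : 0 < (st A r).1.length) :
    (st A r).1.get ⟨0, h⟩ = (vtx m 0, sgn A) := by
  have h0 : (st A 0).1 = ((st A r).1).take 1 := hist_prefix A 0 r (Nat.zero_le r)
  have : (st A 0).1 = [(vtx m 0, sgn A)] := rfl
  rw [this] at h0
  have : ((st A r).1).get ⟨0, h⟩ = (((st A r).1).take 1).get ⟨0, by simp [← h0]⟩ := by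
    simp [List.getElem_take]
  rw [this]
  rw [List.get_eq_getElem, List.getElem_of_eq h0.symm (by simp; exact h)]
  rfl

lemma entry_mistake (r q : ℕ) (hq : q < r + 1) (hql : q < (st A r).1.length) :
    A ((st A r).1.take q) ((st A r).1.get ⟨q, hql⟩).1 ≠ ((st A r).1.get ⟨q, hql⟩).2 := by
  match q with
  | 0 =>
    rw [entry_one A r hql]
    simpa using first_mistake A
  | j + 1 =>
    obtain ⟨p, heq, hne⟩ := step_mistake A j
    have hpre1 : (st A j).1 = ((st A r).1).take (j+1) := hist_prefix A j r (by omega)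
    have hpre2 : (st A (j+1)).1 = ((st A r).1).take (j+2) := hist_prefix A (j+1) r (by omega)
    have hlenj : (st A j).1.length = j + 1 := (invariant A j).1
    have hget : ((st A r).1).get ⟨j+1, hql⟩ = p := by
      have h1 : ((st A r).1).get ⟨j+1, hql⟩ = (((st A r).1).take (j+2))[j+1]'(by
          simp [List.length_take]; omega) := by
        simp [List.getElem_take]
      rw [h1, List.getElem_of_eq (hpre2.symm.trans heq) (by simp [hlenj]; exact hql)]
      rw [List.getElem_append_right (by omega)]
      simp [hlenj]
    rw [hget, ← hpre1]
    exact hne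

end PGB

lemma cut_card {n : ℕ} (t : ℕ) (ht : t + 1 < n) (s : ℤ) (hs : s ≠ -s) (ℓ : Fin n → ℤ)
    (hℓ : ∀ x : Fin n, ℓ x = if x.val ≤ t then s else -s) :
    ((SimpleGraph.pathGraph n).edgeFinset.filter
        fun e => ∃ a b : Fin n, e = s(a, b) ∧ ℓ a ≠ ℓ b).card = 1 := by
  rw [Finset.card_eq_one]
  refine ⟨s(⟨t, by omega⟩, ⟨t+1, ht⟩), ?_⟩
  ext e
  induction e using Sym2.ind with
  | _ a b =>
    simp only [Finset.mem_filter, SimpleGraph.mem_edgeFinset, SimpleGraph.mem_edgeSet,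
      SimpleGraph.pathGraph_adj, Finset.mem_singleton, Sym2.eq, Sym2.rel_iff',
      Prod.mk.injEq, Prod.swap_prod_mk]
    constructor
    · rintro ⟨hadj, x, y, hxy, hne⟩
      have hab : ℓ a ≠ ℓ b := by
        rcases hxy with ⟨h1, h2⟩ | ⟨h1, h2⟩
        · rw [h1, h2]; exact hne
        · rw [h1, h2]; exact hne.symm
      rw [hℓ, hℓ] at hab
      rcases hadj with h | h
      · left
        constructor <;> [skip; skip] <;>
          · apply Fin.ext
            simp only
            by_cases h1 : a.val ≤ t <;> by_cases h2 : b.val ≤ t <;> simp_all <;> omega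
      · right
        constructor <;>
          · apply Fin.ext
            simp only
            by_cases h1 : a.val ≤ t <;> by_cases h2 : b.val ≤ t <;> simp_all <;> omega
    · rintro (⟨h1, h2⟩ | ⟨h1, h2⟩)
      · refine ⟨by left; rw [h1, h2], a, b, Or.inl ⟨rfl, rfl⟩, ?_⟩
        rw [hℓ, hℓ, h1, h2]
        simpa using hs
      · refine ⟨by right; rw [h1, h2], a, b, Or.inl ⟨rfl, rfl⟩, ?_⟩
        rw [hℓ, hℓ, h1, h2]
        simp only [Fin.val_mk]
        simp only [le_refl, if_pos, Nat.lt_irrefl, Nat.not_le.mpr (Nat.lt_succ_self t), if_neg]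
        exact fun h => hs h.symm

/-- On the path graph with `n` vertices, for every (deterministic) online
prediction algorithm `A` there exists an adversarial labeling `ℓ : V → {-1, +1}` with
`|cut(ℓ)| = 1` and an adversarial query sequence forcing the algorithm to make at
least `Ω(log n)` mistakes.  The algorithm maps the history of revealed
(vertex, label) pairs and the queried vertex to a prediction in `{-1, +1}`. -/
theorem path_graph_lower_bound :
    ∃ c : ℝ, 0 < c ∧
      ∀ n : ℕ, 2 ≤ n →
        ∀ A : List (Fin n × ℤ) → Fin n → ℤ,
          ∃ (ℓ : Fin n → ℤ), (∀ x, ℓ x = 1 ∨ ℓ x = -1) ∧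
            ((SimpleGraph.pathGraph n).edgeFinset.filter
                fun e => ∃ a b : Fin n, e = s(a, b) ∧ ℓ a ≠ ℓ b).card = 1 ∧
            ∃ (k : ℕ) (v : Fin k → Fin n),
              c * Real.log n ≤
                ((Finset.univ.filter fun i : Fin k =>
                    A (List.ofFn fun t : Fin i.val =>
                        (v ⟨t.val, lt_trans t.isLt i.isLt⟩,
                         ℓ (v ⟨t.val, lt_trans t.isLt i.isLt⟩))) (v i) ≠ ℓ (v i)).card : ℝ) := by
  have hlog2 : 0 < Real.log 2 := Real.log_pos (by norm_num)
  refine ⟨1 / Real.log 2, by positivity, ?_⟩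
  intro n hn A
  obtain ⟨m, rfl⟩ : ∃ m, n = m + 2 := ⟨n - 2, by omega⟩
  set r := Nat.log 2 (m+1) with hr
  obtain ⟨hlen, hlohi, hhi, hgap, hcons⟩ := PGB.invariant A r
  have hpow : 2^r ≤ m+1 := Nat.pow_log_le_self 2 (by omega)
  have hgap1 : 1 ≤ (PGB.st A r).2.2 - (PGB.st A r).2.1 :=
    le_trans ((Nat.one_le_div_iff (pow_pos (by norm_num) r)).2 hpow) hgap
  set t := (PGB.st A r).2.1 with htdef
  have htlt : t + 1 < m + 2 := by omega
  set s := PGB.sgn A with hsdef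
  have hsne : s ≠ -s := PGB.sgn_ne_neg A
  set ℓ : Fin (m+2) → ℤ := fun x => if x.val ≤ t then s else -s with hℓdef
  set hist := (PGB.st A r).1 with hhist
  have hconsℓ : ∀ p ∈ hist, p.2 = ℓ p.1 := by
    intro p hp
    rcases hcons p hp with ⟨h1, h2⟩ | ⟨h1, h2⟩
    · simp [hℓdef, h1, h2]
    · have : ¬ p.1.val ≤ t := by omega
      simp [hℓdef, h1, this]
  set v : Fin (r+1) → Fin (m+2) := fun i => (hist.get ⟨i.val, by rw [hlen]; exact i.isLt⟩).1
    with hv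
  refine ⟨ℓ, ?_, ?_, r+1, v, ?_⟩
  · intro x
    rcases PGB.sgn_cases A with h | h <;> rw [hℓdef] <;> dsimp only <;> split <;> omega
  · exact cut_card t htlt s hsne ℓ (fun x => rfl)
  · have hofFn : ∀ i : Fin (r+1),
        (List.ofFn fun t' : Fin i.val =>
          (v ⟨t'.val, lt_trans t'.isLt i.isLt⟩, ℓ (v ⟨t'.val, lt_trans t'.isLt i.isLt⟩)))
        = hist.take i.val := by
      intro i
      have hi := i.isLt
      apply List.ext_getElem
      · simp only [List.length_ofFn, List.length_take, hlen]
        omega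
      · intro q h1 h2
        have hq : q < hist.length := by rw [List.length_take] at h2; omega
        simp only [List.getElem_ofFn, List.getElem_take]
        have hc := hconsℓ hist[q] (List.getElem_mem hq)
        exact Prod.ext rfl hc.symm
    have hmis : ∀ i : Fin (r+1),
        A (List.ofFn fun t' : Fin i.val =>
            (v ⟨t'.val, lt_trans t'.isLt i.isLt⟩, ℓ (v ⟨t'.val, lt_trans t'.isLt i.isLt⟩))) (v i)
          ≠ ℓ (v i) := by
      intro i
      rw [hofFn i]
      have hq : i.val < hist.length := by rw [hlen]; exact i.isLt
      have hc := hconsℓ (hist.get ⟨i.val, hq⟩) (hist.get_mem _)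
      intro hcontra
      exact PGB.entry_mistake A r i.val i.isLt hq (by rw [hc]; exact hcontra)
    have hfilter : (Finset.univ.filter fun i : Fin (r+1) =>
        A (List.ofFn fun t' : Fin i.val =>
            (v ⟨t'.val, lt_trans t'.isLt i.isLt⟩, ℓ (v ⟨t'.val, lt_trans t'.isLt i.isLt⟩))) (v i)
          ≠ ℓ (v i)) = Finset.univ :=
      Finset.filter_true_of_mem (fun i _ => hmis i)
    rw [hfilter]
    simp only [Finset.card_univ, Fintype.card_fin]
    have h2 : (m + 2 : ℕ) ≤ 2^(r+1) := by
      have h3 := Nat.lt_pow_succ_log_self (by norm_num : 1 < 2) (m+1)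
      rw [← hr] at h3
      omega
    rw [div_mul_eq_mul_div, one_mul, div_le_iff₀ hlog2]
    calc Real.log ((m + 2 : ℕ) : ℝ) ≤ Real.log ((2:ℝ)^(r+1)) := by
          apply Real.log_le_log (by positivity)
          exact_mod_cast h2
      _ = ((r+1 : ℕ) : ℝ) * Real.log 2 := Real.log_pow _ _
end

section
/- For the path graph on n = 2^k vertices, a halving (binary-search style) adversary strategy forces any deterministic online prediction algorithm to make at least k mistakes while maintaining consistency with a labeling of cut size 1. -/
open Classical Finset

/-- Threshold labeling: `s` below threshold `j`, `-s` from `j` on. -/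
def thrLab (n : ℕ) (s : ℤ) (j : ℕ) : Fin n → ℤ := fun x => if x.val < j then s else -s

lemma thrLab_cut (n j : ℕ) (s : ℤ) (hs : s = 1 ∨ s = -1) (hj1 : 1 ≤ j) (hj2 : j < n) :
    ((SimpleGraph.pathGraph n).edgeFinset.filter
        fun e => ∃ a b : Fin n, e = s(a, b) ∧ thrLab n s j a ≠ thrLab n s j b).card = 1 := by
  have hs0 : s ≠ -s := by rcases hs with h | h <;> rw [h] <;> decide
  have hj0 : j - 1 < n := by omega
  set a0 : Fin n := ⟨j - 1, hj0⟩
  set b0 : Fin n := ⟨j, hj2⟩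
  rw [Finset.card_eq_one]
  refine ⟨s(a0, b0), ?_⟩
  ext e
  simp only [Finset.mem_filter, Finset.mem_singleton, SimpleGraph.mem_edgeFinset]
  constructor
  · rintro ⟨he, a, b, rfl, hab⟩
    rw [SimpleGraph.mem_edgeSet, SimpleGraph.pathGraph_adj] at he
    rw [Sym2.eq_iff]
    simp only [thrLab] at hab
    rcases he with hab1 | hab1
    · left
      by_cases h1 : a.val < j <;> by_cases h2 : b.val < j <;>
        simp [h1, h2] at hab
      · exact ⟨Fin.ext (show a.val = j - 1 by omega),
          Fin.ext (show b.val = j by omega)⟩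
      · omega
    · right
      by_cases h1 : a.val < j <;> by_cases h2 : b.val < j <;>
        simp [h1, h2] at hab
      · omega
      · exact ⟨Fin.ext (show a.val = j by omega),
          Fin.ext (show b.val = j - 1 by omega)⟩
  · rintro rfl
    refine ⟨?_, a0, b0, rfl, ?_⟩
    · rw [SimpleGraph.mem_edgeSet, SimpleGraph.pathGraph_adj]
      left; simp [a0, b0]; omega
    · simp only [thrLab, a0, b0]
      have h1 : j - 1 < j := by omega
      have h2 : ¬ (j < j) := lt_irrefl j
      simp [h1, h2, hs0]

/-- The halving adversary lemma: given a history `h` and a range of `2 ^ m`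
candidate thresholds `(a, a + 2 ^ m]`, there is a threshold `j` in the range and a
sequence `q` of `m` (vertex, label) queries, consistent with the labeling
`thrLab n s j`, on each of which the algorithm `A` errs. -/
lemma adversary (n : ℕ) (A : List (Fin n × ℤ) → Fin n → ℤ) (s : ℤ)
    (hs : s = 1 ∨ s = -1) :
    ∀ (m a : ℕ), a + 2 ^ m ≤ n → ∀ h : List (Fin n × ℤ),
    ∃ (j : ℕ) (q : List (Fin n × ℤ)),
      a < j ∧ j ≤ a + 2 ^ m ∧ q.length = m ∧
      (∀ p ∈ q, p.2 = thrLab n s j p.1) ∧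
      ∀ t (ht : t < q.length),
        A (h ++ q.take t) (q.get ⟨t, ht⟩).1 ≠ (q.get ⟨t, ht⟩).2 := by
  have hs0 : s ≠ -s := by rcases hs with h | h <;> rw [h] <;> decide
  intro m
  induction m with
  | zero =>
      intro a ha h
      exact ⟨a + 1, [], by omega, by omega, rfl, by simp, by simp⟩
  | succ m ih =>
      intro a ha h
      have hposm : 0 < 2 ^ m := Nat.two_pow_pos m
      have hpow : 2 ^ (m + 1) = 2 ^ m + 2 ^ m := by rw [pow_succ]; omega
      have hw : a + 2 ^ m < n := by omega
      set w : Fin n := ⟨a + 2 ^ m, hw⟩ with hwdef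
      by_cases hp : A h w = s
      · -- answer -s : keep thresholds j ≤ a + 2 ^ m
        obtain ⟨j, q', hj1, hj2, hlen, hcons, hpred⟩ :=
          ih a (by omega) (h ++ [(w, -s)])
        refine ⟨j, (w, -s) :: q', hj1, by omega, by simp [hlen], ?_, ?_⟩
        · rintro p hp'
          rcases List.mem_cons.mp hp' with rfl | hp'
          · simp only [thrLab]
            have : ¬ (w.val < j) := by simp [hwdef]; omega
            simp [this]
          · exact hcons p hp'
        · rintro (_ | t) ht
          · simpa [hp] using hs0
          · simp only [List.take_succ_cons, List.get_cons_succ]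
            have heq : h ++ ((w, -s) :: List.take t q') =
                (h ++ [(w, -s)]) ++ List.take t q' := by simp
            rw [heq]
            exact hpred t (by simpa using Nat.succ_lt_succ_iff.mp ht)
      · -- answer s : keep thresholds j > a + 2 ^ m
        obtain ⟨j, q', hj1, hj2, hlen, hcons, hpred⟩ :=
          ih (a + 2 ^ m) (by omega) (h ++ [(w, s)])
        refine ⟨j, (w, s) :: q', by omega, by omega, by simp [hlen], ?_, ?_⟩
        · rintro p hp'
          rcases List.mem_cons.mp hp' with rfl | hp'
          · simp only [thrLab]
            have : w.val < j := by simp [hwdef]; omega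
            simp [this]
          · exact hcons p hp'
        · rintro (_ | t) ht
          · simpa using hp
          · simp only [List.take_succ_cons, List.get_cons_succ]
            have heq : h ++ ((w, s) :: List.take t q') =
                (h ++ [(w, s)]) ++ List.take t q' := by simp
            rw [heq]
            exact hpred t (by simpa using Nat.succ_lt_succ_iff.mp ht)

/-- For the path graph on `n = 2^k` vertices (`k ≥ 1`), a halving
(binary-search style) adversary forces any deterministic online prediction algorithm
to make at least `k` mistakes, while the answers remain consistent with a labeling
of cut size 1 (a threshold labeling).  The algorithm maps the history of revealed
(vertex, label) pairs and the queried vertex to a prediction in `{-1, +1}`. -/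
theorem path_graph_halving_adversary (k : ℕ) (hk : 1 ≤ k) :
    ∀ A : List (Fin (2 ^ k) × ℤ) → Fin (2 ^ k) → ℤ,
      ∃ ℓ : Fin (2 ^ k) → ℤ, (∀ x, ℓ x = 1 ∨ ℓ x = -1) ∧
        ((SimpleGraph.pathGraph (2 ^ k)).edgeFinset.filter
            fun e => ∃ a b : Fin (2 ^ k), e = s(a, b) ∧ ℓ a ≠ ℓ b).card = 1 ∧
        ∃ (m : ℕ) (v : Fin m → Fin (2 ^ k)),
          k ≤ (Finset.univ.filter fun i : Fin m =>
                A (List.ofFn fun t : Fin i.val =>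
                    (v ⟨t.val, lt_trans t.isLt i.isLt⟩,
                     ℓ (v ⟨t.val, lt_trans t.isLt i.isLt⟩))) (v i) ≠ ℓ (v i)).card := by
  intro A
  have hposk : 0 < 2 ^ (k - 1) := Nat.two_pow_pos _
  have hpow : 2 ^ k = 2 ^ (k - 1) * 2 := by
    rw [← pow_succ]; congr 1; omega
  have hhalf : 2 ^ (k - 1) < 2 ^ k := by omega
  set v1 : Fin (2 ^ k) := ⟨2 ^ (k - 1), hhalf⟩ with hv1
  set p1 := A [] v1 with hp1
  set y1 : ℤ := if p1 = 1 then -1 else 1 with hy1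
  have hy1pm : y1 = 1 ∨ y1 = -1 := by
    rw [hy1]; split <;> simp
  have hy1ne : p1 ≠ y1 := by
    rw [hy1]; split <;> omega
  set s : ℤ := -y1 with hsdef
  have hs : s = 1 ∨ s = -1 := by
    rcases hy1pm with h | h <;> rw [hsdef, h] <;> simp
  obtain ⟨j, q', hj1, hj2, hlen, hcons, hpred⟩ :=
    adversary (2 ^ k) A s hs (k - 1) 0 (by omega) [(v1, y1)]
  set ℓ : Fin (2 ^ k) → ℤ := thrLab (2 ^ k) s j with hℓ
  have hℓv1 : ℓ v1 = y1 := by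
    rw [hℓ]
    simp only [thrLab]
    have hnot : ¬ (v1.val < j) := by simp [hv1]; omega
    simp [hnot, hsdef]
  set q : List (Fin (2 ^ k) × ℤ) := (v1, y1) :: q' with hq
  have hqlen : q.length = k := by simp [hq, hlen]; omega
  have hqcons : ∀ p ∈ q, p.2 = ℓ p.1 := by
    rintro p hp
    rcases List.mem_cons.mp hp with rfl | hp
    · exact hℓv1.symm
    · exact hcons p hp
  have hqpred : ∀ t (ht : t < q.length),
      A (q.take t) (q.get ⟨t, ht⟩).1 ≠ (q.get ⟨t, ht⟩).2 := by
    rintro (_ | t) ht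
    · simpa [hq] using hy1ne
    · simp only [hq, List.take_succ_cons, List.get_cons_succ]
      have heq : (v1, y1) :: List.take t q' = [(v1, y1)] ++ List.take t q' := by simp
      rw [heq]
      exact hpred t (by simpa [hq] using Nat.succ_lt_succ_iff.mp ht)
  refine ⟨ℓ, ?_, ?_, k, fun i => (q.get ⟨i.val, by rw [hqlen]; exact i.isLt⟩).1, ?_⟩
  · intro x
    rw [hℓ]
    simp only [thrLab]
    rcases hs with h | h <;> rw [h] <;> split <;> simp
  · exact thrLab_cut (2 ^ k) j s hs (by omega) (by omega)
  · set v : Fin k → Fin (2 ^ k) :=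
      fun i => (q.get ⟨i.val, by rw [hqlen]; exact i.isLt⟩).1 with hv
    have key : ∀ i : Fin k,
        A (List.ofFn fun t : Fin i.val =>
            (v ⟨t.val, lt_trans t.isLt i.isLt⟩,
             ℓ (v ⟨t.val, lt_trans t.isLt i.isLt⟩))) (v i) ≠ ℓ (v i) := by
      intro i
      have hik : i.val < q.length := by rw [hqlen]; exact i.isLt
      have hofn : (List.ofFn fun t : Fin i.val =>
            (v ⟨t.val, lt_trans t.isLt i.isLt⟩,
             ℓ (v ⟨t.val, lt_trans t.isLt i.isLt⟩))) = q.take i.val := by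
        apply List.ext_getElem
        · simp only [List.length_ofFn, List.length_take, hqlen]
          omega
        · intro t h1 h2
          have htq : t < q.length := by
            simp only [List.length_take] at h2; omega
          simp only [List.getElem_ofFn, List.getElem_take]
          have hmem : q.get ⟨t, htq⟩ ∈ q := List.get_mem q ⟨t, htq⟩
          have hth := hqcons _ hmem
          simp only [hv]
          rw [Prod.ext_iff]
          constructor
          · simp [List.get_eq_getElem]
          · simp only [List.get_eq_getElem] at hth ⊢
            rw [← hth]
      rw [hofn]
      have hAp := hqpred i.val hik
      have hℓvi : ℓ (v i) = (q.get ⟨i.val, hik⟩).2 :=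
        (hqcons _ (List.get_mem q ⟨i.val, hik⟩)).symm
      rw [hℓvi]
      exact hAp
    have hfu : (Finset.univ.filter fun i : Fin k =>
        A (List.ofFn fun t : Fin i.val =>
            (v ⟨t.val, lt_trans t.isLt i.isLt⟩,
             ℓ (v ⟨t.val, lt_trans t.isLt i.isLt⟩))) (v i) ≠ ℓ (v i)) = Finset.univ := by
      apply Finset.filter_true_of_mem
      intro i _
      exact key i
    rw [hfu]
    simp
end
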